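/- Let P be a homothetic packing of n squares with contact graph G = ([n], E), and let {i,j} ∈ E. Define p_{ij} = ( x_i − r_i(x_i − x_j)/(r_i + r_j), y_i − r_i(y_i − y_j)/(r_i + r_j) ). Then: (1) the closed line segment [p_i, p_j] is contained in S_i ∪ S_j; (2) the set [p_i, p_j] ∖ {p_{ij}} is contained in S_i° ∪ S_j° (the union of the interiors); (3) p_{ij} lies in the interior of S_i ∪ S_j if and only if {i,j} ∉ E_x ∩ E_y. -/

import Mathlib

open Finset Real

noncomputable section

/-- The standard square `[-1,1] × [-1,1]`. -/
def stdSquare : Set (ℝ × ℝ) := {q : ℝ × ℝ | -1 ≤ q.1 ∧ q.1 ≤ 1 ∧ -1 ≤ q.2 ∧ q.2 ≤ 1}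

/-- The homothetic copy `r • S + p` of the standard square (radius `r`, centre `p`). -/
def homSq (r : ℝ) (p : ℝ × ℝ) : Set (ℝ × ℝ) := (fun q => r • q + p) '' stdSquare

/-- A homothetic packing of `n` squares with radii `r` and centres `p`:
all radii are positive and the interiors of the squares are pairwise disjoint. -/
def IsSqPacking {n : ℕ} (r : Fin n → ℝ) (p : Fin n → ℝ × ℝ) : Prop :=
  (∀ i, 0 < r i) ∧
  ∀ i j, i ≠ j → interior (homSq (r i) (p i)) ∩ interior (homSq (r j) (p j)) = ∅

/-- Squares `i` and `j` are distinct and touch: an edge of the contact graph. -/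
def SqContact {n : ℕ} (r : Fin n → ℝ) (p : Fin n → ℝ × ℝ) (i j : Fin n) : Prop :=
  i ≠ j ∧ (homSq (r i) (p i) ∩ homSq (r j) (p j)).Nonempty

/-- The contact graph of a homothetic square packing. -/
def contactGraph {n : ℕ} (r : Fin n → ℝ) (p : Fin n → ℝ × ℝ) : SimpleGraph (Fin n) where
  Adj i j := SqContact r p i j
  symm := by
    constructor
    intro i j h
    refine ⟨h.1.symm, ?_⟩
    rw [Set.inter_comm]
    exact h.2
  loopless := ⟨fun i h => h.1 rfl⟩

/-- `{i,j}` is an x-direction contact: the squares touch and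
`r i + r j = |x_i - x_j| ≥ |y_i - y_j|`. -/
def XContact {n : ℕ} (r : Fin n → ℝ) (p : Fin n → ℝ × ℝ) (i j : Fin n) : Prop :=
  SqContact r p i j ∧ r i + r j = |(p i).1 - (p j).1| ∧
    |(p i).2 - (p j).2| ≤ |(p i).1 - (p j).1|

/-- `{i,j}` is a y-direction contact: the squares touch and
`r i + r j = |y_i - y_j| ≥ |x_i - x_j|`. -/
def YContact {n : ℕ} (r : Fin n → ℝ) (p : Fin n → ℝ × ℝ) (i j : Fin n) : Prop :=
  SqContact r p i j ∧ r i + r j = |(p i).2 - (p j).2| ∧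
    |(p i).1 - (p j).1| ≤ |(p i).2 - (p j).2|

/-- The graph `([n], E_x)` of x-direction contacts. -/
def xGraph {n : ℕ} (r : Fin n → ℝ) (p : Fin n → ℝ × ℝ) : SimpleGraph (Fin n) where
  Adj i j := XContact r p i j
  symm := by
    constructor
    intro i j h
    refine ⟨(contactGraph r p).adj_symm h.1, ?_, ?_⟩
    · rw [abs_sub_comm, add_comm]; exact h.2.1
    · rw [abs_sub_comm ((p j).2), abs_sub_comm ((p j).1)]; exact h.2.2
  loopless := ⟨fun i h => h.1.1 rfl⟩

/-- The graph `([n], E_y)` of y-direction contacts. -/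
def yGraph {n : ℕ} (r : Fin n → ℝ) (p : Fin n → ℝ × ℝ) : SimpleGraph (Fin n) where
  Adj i j := YContact r p i j
  symm := by
    constructor
    intro i j h
    refine ⟨(contactGraph r p).adj_symm h.1, ?_, ?_⟩
    · rw [abs_sub_comm, add_comm]; exact h.2.1
    · rw [abs_sub_comm ((p j).2), abs_sub_comm ((p j).1)]; exact h.2.2
  loopless := ⟨fun i h => h.1.1 rfl⟩

/-- Positive radii satisfy the weak generic condition if the only `σ : [n] → {-1,0,1}`
with at least 4 zeroes satisfying `Σ σ i * r i = 0` is the zero function. -/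
def WeakGeneric {n : ℕ} (r : Fin n → ℝ) : Prop :=
  ∀ σ : Fin n → ℤ, (∀ i, σ i = -1 ∨ σ i = 0 ∨ σ i = 1) →
    4 ≤ (Finset.univ.filter fun i => σ i = 0).card →
    (∑ i, (σ i : ℝ) * r i) = 0 → σ = 0

/-- `z` is a corner of the axis-parallel square with radius `r` and centre `c`. -/
def IsSqCorner (r : ℝ) (c z : ℝ × ℝ) : Prop := |z.1 - c.1| = r ∧ |z.2 - c.2| = r

/-- The four squares `i, j, k, l` share a corner: their common intersection is a single
point which is a corner of each of the four squares. -/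
def ShareCorner {n : ℕ} (r : Fin n → ℝ) (p : Fin n → ℝ × ℝ) (i j k l : Fin n) : Prop :=
  ∃ z : ℝ × ℝ,
    homSq (r i) (p i) ∩ homSq (r j) (p j) ∩ homSq (r k) (p k) ∩ homSq (r l) (p l) = {z} ∧
    IsSqCorner (r i) (p i) z ∧ IsSqCorner (r j) (p j) z ∧
    IsSqCorner (r k) (p k) z ∧ IsSqCorner (r l) (p l) z


lemma homSq_eq {r : ℝ} (hr : 0 < r) (c : ℝ × ℝ) :
    homSq r c = Set.Icc (c.1 - r) (c.1 + r) ×ˢ Set.Icc (c.2 - r) (c.2 + r) := by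
  ext q
  constructor
  · rintro ⟨a, ⟨h1, h2, h3, h4⟩, rfl⟩
    simp only [Set.mem_prod, Set.mem_Icc, Prod.fst_add, Prod.snd_add, Prod.smul_fst,
      Prod.smul_snd, smul_eq_mul]
    constructor <;> constructor <;> nlinarith
  · rintro ⟨⟨h1, h2⟩, h3, h4⟩
    refine ⟨((q.1 - c.1)/r, (q.2 - c.2)/r), ⟨?_, ?_, ?_, ?_⟩, ?_⟩
    · rw [le_div_iff₀ hr]; linarith
    · rw [div_le_iff₀ hr]; linarith
    · rw [le_div_iff₀ hr]; linarith
    · rw [div_le_iff₀ hr]; linarith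
    · ext <;> simp <;> field_simp <;> ring

lemma mem_homSq {r : ℝ} (hr : 0 < r) {c q : ℝ × ℝ} :
    q ∈ homSq r c ↔ |q.1 - c.1| ≤ r ∧ |q.2 - c.2| ≤ r := by
  rw [homSq_eq hr c]
  simp only [Set.mem_prod, Set.mem_Icc, abs_le]
  constructor
  · rintro ⟨⟨h1, h2⟩, h3, h4⟩; exact ⟨⟨by linarith, by linarith⟩, by linarith, by linarith⟩
  · rintro ⟨⟨h1, h2⟩, h3, h4⟩; exact ⟨⟨by linarith, by linarith⟩, by linarith, by linarith⟩

lemma mem_interior_homSq {r : ℝ} (hr : 0 < r) {c q : ℝ × ℝ} :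
    q ∈ interior (homSq r c) ↔ |q.1 - c.1| < r ∧ |q.2 - c.2| < r := by
  rw [homSq_eq hr c, interior_prod_eq, interior_Icc, interior_Icc]
  simp only [Set.mem_prod, Set.mem_Ioo, abs_lt]
  constructor
  · rintro ⟨⟨h1, h2⟩, h3, h4⟩; exact ⟨⟨by linarith, by linarith⟩, by linarith, by linarith⟩
  · rintro ⟨⟨h1, h2⟩, h3, h4⟩; exact ⟨⟨by linarith, by linarith⟩, by linarith, by linarith⟩

lemma aux_interior (xi yi xj yj ri rj : ℝ) (hri : 0 < ri) (hrj : 0 < rj)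
    (hdx : |xi - xj| = ri + rj) (hdy : |yi - yj| < ri + rj) :
    ∃ ε > 0, ∀ q1 q2 : ℝ,
      |q1 - (xi + ri / (ri + rj) * (xj - xi))| < ε →
      |q2 - (yi + ri / (ri + rj) * (yj - yi))| < ε →
      (|q1 - xi| ≤ ri ∧ |q2 - yi| ≤ ri) ∨ (|q1 - xj| ≤ rj ∧ |q2 - yj| ≤ rj) := by
  have hR : 0 < ri + rj := by linarith
  obtain ⟨t0, ht0def⟩ : ∃ t, t = ri / (ri + rj) := ⟨_, rfl⟩
  obtain ⟨s0, hs0def⟩ : ∃ t, t = rj / (ri + rj) := ⟨_, rfl⟩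
  have ht0R : t0 * (ri + rj) = ri := by rw [ht0def]; field_simp
  have hs0R : s0 * (ri + rj) = rj := by rw [hs0def]; field_simp
  have ht0 : 0 < t0 := by rw [ht0def]; positivity
  have hs0 : 0 < s0 := by rw [hs0def]; positivity
  have hts : t0 + s0 = 1 := by rw [ht0def, hs0def]; field_simp
  obtain ⟨dy, hdydef⟩ : ∃ t, t = |yi - yj| := ⟨_, rfl⟩
  have hdy' : dy < ri + rj := hdydef ▸ hdy
  have hdy0 : 0 ≤ dy := hdydef ▸ abs_nonneg _
  have hA : t0 * dy < ri := by nlinarith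
  have hB : s0 * dy < rj := by nlinarith
  obtain ⟨u, hudef⟩ : ∃ t, t = (xj - xi) / (ri + rj) := ⟨_, rfl⟩
  have huR : u * (ri + rj) = xj - xi := by rw [hudef]; field_simp
  have hu : |u| = 1 := by
    rw [hudef, abs_div, abs_of_pos hR, abs_sub_comm, hdx, div_self hR.ne']
  have hu2 : u * u = 1 := by
    rcases abs_eq (by norm_num : (0:ℝ) ≤ 1) |>.mp hu with h | h <;> rw [h] <;> ring
  obtain ⟨P1, hP1⟩ : ∃ t, t = xi + t0 * (xj - xi) := ⟨_, rfl⟩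
  obtain ⟨P2, hP2⟩ : ∃ t, t = yi + t0 * (yj - yi) := ⟨_, rfl⟩
  have h1i : P1 - xi = u * ri := by
    calc P1 - xi = t0 * (u * (ri + rj)) := by rw [huR, hP1]; ring
    _ = u * (t0 * (ri + rj)) := by ring
    _ = u * ri := by rw [ht0R]
  have h1j : P1 - xj = -(u * rj) := by
    calc P1 - xj = (t0 - 1) * (u * (ri + rj)) := by rw [huR, hP1]; ring
    _ = -(u * (s0 * (ri + rj))) := by rw [show t0 - 1 = -s0 by linarith]; ring
    _ = -(u * rj) := by rw [hs0R]
  have h2i : |P2 - yi| = t0 * dy := by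
    rw [hP2, show yi + t0 * (yj - yi) - yi = t0 * (yj - yi) by ring, abs_mul,
      abs_of_pos ht0, abs_sub_comm, ← hdydef]
  have h2j : |P2 - yj| = s0 * dy := by
    rw [hP2, show yi + t0 * (yj - yi) - yj = s0 * (yi - yj) by
        rw [show s0 = 1 - t0 by linarith]; ring, abs_mul, abs_of_pos hs0, ← hdydef]
  refine ⟨min (min ri rj) (min (ri - t0 * dy) (rj - s0 * dy)), by
    simp only [lt_min_iff]; exact ⟨⟨hri, hrj⟩, by linarith, by linarith⟩, ?_⟩
  intro q1 q2 hq1 hq2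
  rw [← ht0def, ← hP1] at hq1
  rw [← ht0def, ← hP2] at hq2
  simp only [lt_min_iff] at hq1 hq2
  obtain ⟨⟨hq1i, hq1j⟩, hq1A, hq1B⟩ := hq1
  obtain ⟨⟨hq2i, hq2j⟩, hq2A, hq2B⟩ := hq2
  have hyi : |q2 - yi| ≤ ri := by
    have h := abs_sub_le q2 P2 yi
    rw [h2i] at h; linarith
  have hyj : |q2 - yj| ≤ rj := by
    have h := abs_sub_le q2 P2 yj
    rw [h2j] at h; linarith
  have hb : |u * (q1 - P1)| = |q1 - P1| := by rw [abs_mul, hu, one_mul]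
  have hlo := neg_abs_le (u * (q1 - P1))
  have hhi := le_abs_self (u * (q1 - P1))
  rw [hb] at hlo hhi
  rcases le_or_gt (u * (q1 - P1)) 0 with hc | hc
  · left
    refine ⟨?_, hyi⟩
    have hxfact : u * (q1 - xi) = u * (q1 - P1) + ri := by
      calc u * (q1 - xi) = u * (q1 - P1) + u * (P1 - xi) := by ring
      _ = u * (q1 - P1) + u * u * ri := by rw [h1i]; ring
      _ = u * (q1 - P1) + ri := by rw [hu2]; ring
    have : |q1 - xi| = |u * (q1 - xi)| := by rw [abs_mul, hu, one_mul]
    rw [this, abs_le, hxfact]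
    constructor <;> linarith
  · right
    refine ⟨?_, hyj⟩
    have hxfact : u * (q1 - xj) = u * (q1 - P1) - rj := by
      calc u * (q1 - xj) = u * (q1 - P1) + u * (P1 - xj) := by ring
      _ = u * (q1 - P1) - u * u * rj := by rw [h1j]; ring
      _ = u * (q1 - P1) - rj := by rw [hu2]; ring
    have : |q1 - xj| = |u * (q1 - xj)| := by rw [abs_mul, hu, one_mul]
    rw [this, abs_le, hxfact]
    constructor <;> linarith

set_option maxHeartbeats 2000000 in
/-- **Lemma 2.7.** For an edge `{i,j}` of the contact graph, with
`p_{ij} = (x_i - r_i(x_i-x_j)/(r_i+r_j), y_i - r_i(y_i-y_j)/(r_i+r_j))`: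
(1) the segment `[p_i, p_j]` lies in `S_i ∪ S_j`;
(2) `[p_i, p_j] \ {p_{ij}}` lies in `S_i° ∪ S_j°`;
(3) `p_{ij}` lies in the interior of `S_i ∪ S_j` iff `{i,j} ∉ E_x ∩ E_y`. -/
theorem segment_lemma (n : ℕ) (r : Fin n → ℝ) (p : Fin n → ℝ × ℝ)
    (hP : IsSqPacking r p) (i j : Fin n) (hij : SqContact r p i j)
    (pij : ℝ × ℝ)
    (hpij : pij = ((p i).1 - r i * ((p i).1 - (p j).1) / (r i + r j),
                   (p i).2 - r i * ((p i).2 - (p j).2) / (r i + r j))) :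
    segment ℝ (p i) (p j) ⊆ homSq (r i) (p i) ∪ homSq (r j) (p j) ∧
    segment ℝ (p i) (p j) \ {pij} ⊆
      interior (homSq (r i) (p i)) ∪ interior (homSq (r j) (p j)) ∧
    (pij ∈ interior (homSq (r i) (p i) ∪ homSq (r j) (p j)) ↔
      ¬(XContact r p i j ∧ YContact r p i j)) := by
  obtain ⟨hpos, hdisj⟩ := hP
  have hne := hij.1
  have hri := hpos i
  have hrj := hpos j
  have hR : 0 < r i + r j := by linarith
  obtain ⟨w, hwi, hwj⟩ := hij.2
  rw [mem_homSq hri] at hwi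
  rw [mem_homSq hrj] at hwj
  have hdx : |(p i).1 - (p j).1| ≤ r i + r j := by
    have h := abs_sub_le (p i).1 w.1 (p j).1
    have h1 : |(p i).1 - w.1| ≤ r i := by rw [abs_sub_comm]; exact hwi.1
    linarith [hwj.1]
  have hdy : |(p i).2 - (p j).2| ≤ r i + r j := by
    have h := abs_sub_le (p i).2 w.2 (p j).2
    have h1 : |(p i).2 - w.2| ≤ r i := by rw [abs_sub_comm]; exact hwi.2
    linarith [hwj.2]
  obtain ⟨t0, ht0def⟩ : ∃ t, t = r i / (r i + r j) := ⟨_, rfl⟩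
  obtain ⟨s0, hs0def⟩ : ∃ t, t = r j / (r i + r j) := ⟨_, rfl⟩
  have ht0R : t0 * (r i + r j) = r i := by rw [ht0def]; field_simp
  have hs0R : s0 * (r i + r j) = r j := by rw [hs0def]; field_simp
  have ht0pos : 0 < t0 := by rw [ht0def]; positivity
  have hs0pos : 0 < s0 := by rw [hs0def]; positivity
  have hts : t0 + s0 = 1 := by rw [ht0def, hs0def]; field_simp
  have hpij1 : pij.1 = (p i).1 + t0 * ((p j).1 - (p i).1) := by
    rw [show pij.1 = (p i).1 - r i * ((p i).1 - (p j).1) / (r i + r j) from by rw [hpij],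
      ht0def]; ring
  have hpij2 : pij.2 = (p i).2 + t0 * ((p j).2 - (p i).2) := by
    rw [show pij.2 = (p i).2 - r i * ((p i).2 - (p j).2) / (r i + r j) from by rw [hpij],
      ht0def]; ring
  have hpi1 : |pij.1 - (p i).1| = t0 * |(p i).1 - (p j).1| := by
    rw [hpij1, show (p i).1 + t0 * ((p j).1 - (p i).1) - (p i).1 = t0 * ((p j).1 - (p i).1)
      from by ring, abs_mul, abs_of_pos ht0pos, abs_sub_comm]
  have hpi2 : |pij.2 - (p i).2| = t0 * |(p i).2 - (p j).2| := by
    rw [hpij2, show (p i).2 + t0 * ((p j).2 - (p i).2) - (p i).2 = t0 * ((p j).2 - (p i).2)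
      from by ring, abs_mul, abs_of_pos ht0pos, abs_sub_comm]
  have hpj1 : |pij.1 - (p j).1| = s0 * |(p i).1 - (p j).1| := by
    rw [hpij1, show (p i).1 + t0 * ((p j).1 - (p i).1) - (p j).1 = s0 * ((p i).1 - (p j).1)
      from by rw [show s0 = 1 - t0 from by linarith]; ring, abs_mul, abs_of_pos hs0pos]
  have hpj2 : |pij.2 - (p j).2| = s0 * |(p i).2 - (p j).2| := by
    rw [hpij2, show (p i).2 + t0 * ((p j).2 - (p i).2) - (p j).2 = s0 * ((p i).2 - (p j).2)
      from by rw [show s0 = 1 - t0 from by linarith]; ring, abs_mul, abs_of_pos hs0pos]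
  have hmax : |(p i).1 - (p j).1| = r i + r j ∨ |(p i).2 - (p j).2| = r i + r j := by
    by_contra hcon
    push_neg at hcon
    have h1 := lt_of_le_of_ne hdx hcon.1
    have h2 := lt_of_le_of_ne hdy hcon.2
    have hmem : pij ∈ interior (homSq (r i) (p i)) ∩ interior (homSq (r j) (p j)) := by
      constructor
      · rw [mem_interior_homSq hri]
        refine ⟨?_, ?_⟩
        · rw [hpi1]; nlinarith [mul_pos ht0pos (sub_pos.mpr h1)]
        · rw [hpi2]; nlinarith [mul_pos ht0pos (sub_pos.mpr h2)]
      · rw [mem_interior_homSq hrj]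
        refine ⟨?_, ?_⟩
        · rw [hpj1]; nlinarith [mul_pos hs0pos (sub_pos.mpr h1)]
        · rw [hpj2]; nlinarith [mul_pos hs0pos (sub_pos.mpr h2)]
    rw [hdisj i j hne] at hmem
    exact hmem
  refine ⟨?_, ?_, ?_⟩
  · rw [segment_eq_image]
    rintro q ⟨t, ⟨htl, htu⟩, rfl⟩
    dsimp only
    have hq1 : ((1 - t) • p i + t • p j).1 - (p i).1 = t * ((p j).1 - (p i).1) := by
      simp only [Prod.fst_add, Prod.smul_fst, smul_eq_mul]; ring
    have hq2 : ((1 - t) • p i + t • p j).2 - (p i).2 = t * ((p j).2 - (p i).2) := by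
      simp only [Prod.snd_add, Prod.smul_snd, smul_eq_mul]; ring
    have hq1' : ((1 - t) • p i + t • p j).1 - (p j).1 = (1 - t) * ((p i).1 - (p j).1) := by
      simp only [Prod.fst_add, Prod.smul_fst, smul_eq_mul]; ring
    have hq2' : ((1 - t) • p i + t • p j).2 - (p j).2 = (1 - t) * ((p i).2 - (p j).2) := by
      simp only [Prod.snd_add, Prod.smul_snd, smul_eq_mul]; ring
    rcases le_total t t0 with hc | hc
    · left
      rw [mem_homSq hri]
      constructor
      · rw [hq1, abs_mul, abs_of_nonneg htl, abs_sub_comm]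
        have H1 := mul_nonneg htl (sub_nonneg.mpr hdx)
        have H2 := mul_nonneg (sub_nonneg.mpr hc) hR.le
        nlinarith
      · rw [hq2, abs_mul, abs_of_nonneg htl, abs_sub_comm]
        have H1 := mul_nonneg htl (sub_nonneg.mpr hdy)
        have H2 := mul_nonneg (sub_nonneg.mpr hc) hR.le
        nlinarith
    · right
      rw [mem_homSq hrj]
      have h1t : 0 ≤ 1 - t := by linarith
      have hcs : 1 - t ≤ s0 := by linarith
      constructor
      · rw [hq1', abs_mul, abs_of_nonneg h1t]
        have H1 := mul_nonneg h1t (sub_nonneg.mpr hdx)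
        have H2 := mul_nonneg (sub_nonneg.mpr hcs) hR.le
        nlinarith
      · rw [hq2', abs_mul, abs_of_nonneg h1t]
        have H1 := mul_nonneg h1t (sub_nonneg.mpr hdy)
        have H2 := mul_nonneg (sub_nonneg.mpr hcs) hR.le
        nlinarith
  · rintro q ⟨hseg, hnot⟩
    rw [segment_eq_image] at hseg
    obtain ⟨t, ⟨htl, htu⟩, rfl⟩ := hseg
    dsimp only
    have hq1 : ((1 - t) • p i + t • p j).1 - (p i).1 = t * ((p j).1 - (p i).1) := by
      simp only [Prod.fst_add, Prod.smul_fst, smul_eq_mul]; ring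
    have hq2 : ((1 - t) • p i + t • p j).2 - (p i).2 = t * ((p j).2 - (p i).2) := by
      simp only [Prod.snd_add, Prod.smul_snd, smul_eq_mul]; ring
    have hq1' : ((1 - t) • p i + t • p j).1 - (p j).1 = (1 - t) * ((p i).1 - (p j).1) := by
      simp only [Prod.fst_add, Prod.smul_fst, smul_eq_mul]; ring
    have hq2' : ((1 - t) • p i + t • p j).2 - (p j).2 = (1 - t) * ((p i).2 - (p j).2) := by
      simp only [Prod.snd_add, Prod.smul_snd, smul_eq_mul]; ring
    have htne : t ≠ t0 := by
      intro h
      apply hnot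
      rw [Set.mem_singleton_iff, Prod.ext_iff]
      constructor
      · rw [hpij1, ← h]; simp only [Prod.fst_add, Prod.smul_fst, smul_eq_mul]; ring
      · rw [hpij2, ← h]; simp only [Prod.snd_add, Prod.smul_snd, smul_eq_mul]; ring
    rcases htne.lt_or_gt with hc | hc
    · left
      rw [mem_interior_homSq hri]
      constructor
      · rw [hq1, abs_mul, abs_of_nonneg htl, abs_sub_comm]
        have H1 := mul_nonneg htl (sub_nonneg.mpr hdx)
        have H2 := mul_pos (sub_pos.mpr hc) hR
        nlinarith
      · rw [hq2, abs_mul, abs_of_nonneg htl, abs_sub_comm]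
        have H1 := mul_nonneg htl (sub_nonneg.mpr hdy)
        have H2 := mul_pos (sub_pos.mpr hc) hR
        nlinarith
    · right
      rw [mem_interior_homSq hrj]
      have h1t : 0 ≤ 1 - t := by linarith
      have hcs : 1 - t < s0 := by linarith
      constructor
      · rw [hq1', abs_mul, abs_of_nonneg h1t]
        have H1 := mul_nonneg h1t (sub_nonneg.mpr hdx)
        have H2 := mul_pos (sub_pos.mpr hcs) hR
        nlinarith
      · rw [hq2', abs_mul, abs_of_nonneg h1t]
        have H1 := mul_nonneg h1t (sub_nonneg.mpr hdy)
        have H2 := mul_pos (sub_pos.mpr hcs) hR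
        nlinarith
  · constructor
    · intro hmem hboth
      obtain ⟨hX, hY⟩ := hboth
      have hdxR : |(p i).1 - (p j).1| = r i + r j := hX.2.1.symm
      have hdyR : |(p i).2 - (p j).2| = r i + r j := hY.2.1.symm
      rw [mem_interior_iff_mem_nhds, Metric.mem_nhds_iff] at hmem
      obtain ⟨ε, hε, hball⟩ := hmem
      obtain ⟨u, hudef⟩ : ∃ t, t = ((p j).1 - (p i).1) / (r i + r j) := ⟨_, rfl⟩
      obtain ⟨v, hvdef⟩ : ∃ t, t = ((p j).2 - (p i).2) / (r i + r j) := ⟨_, rfl⟩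
      have huR : u * (r i + r j) = (p j).1 - (p i).1 := by rw [hudef]; field_simp
      have hvR : v * (r i + r j) = (p j).2 - (p i).2 := by rw [hvdef]; field_simp
      have hu : |u| = 1 := by
        rw [hudef, abs_div, abs_of_pos hR, abs_sub_comm, hdxR, div_self hR.ne']
      have hv : |v| = 1 := by
        rw [hvdef, abs_div, abs_of_pos hR, abs_sub_comm, hdyR, div_self hR.ne']
      have hP1i : pij.1 - (p i).1 = u * r i := by
        calc pij.1 - (p i).1 = t0 * (u * (r i + r j)) := by rw [huR, hpij1]; ring
        _ = u * (t0 * (r i + r j)) := by ring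
        _ = u * r i := by rw [ht0R]
      have hP2j : pij.2 - (p j).2 = -(v * r j) := by
        calc pij.2 - (p j).2 = (t0 - 1) * (v * (r i + r j)) := by rw [hvR, hpij2]; ring
        _ = -(v * (s0 * (r i + r j))) := by rw [show t0 - 1 = -s0 from by linarith]; ring
        _ = -(v * r j) := by rw [hs0R]
      have hqball : ((pij.1 + u * (ε / 2), pij.2 - v * (ε / 2)) : ℝ × ℝ) ∈ Metric.ball pij ε := by
        rw [Metric.mem_ball, Prod.dist_eq]
        have d1 : dist (pij.1 + u * (ε / 2)) pij.1 = ε / 2 := by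
          rw [Real.dist_eq, show pij.1 + u * (ε / 2) - pij.1 = u * (ε / 2) from by ring,
            abs_mul, hu, one_mul, abs_of_pos (by linarith)]
        have d2 : dist (pij.2 - v * (ε / 2)) pij.2 = ε / 2 := by
          rw [Real.dist_eq, show pij.2 - v * (ε / 2) - pij.2 = -(v * (ε / 2)) from by ring,
            abs_neg, abs_mul, hv, one_mul, abs_of_pos (by linarith)]
        show dist (pij.1 + u * (ε / 2)) pij.1 ⊔ dist (pij.2 - v * (ε / 2)) pij.2 < ε
        rw [d1, d2, max_self]
        linarith
      rcases hball hqball with h | h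
      · rw [mem_homSq hri] at h
        have h1' : |pij.1 + u * (ε / 2) - (p i).1| ≤ r i := h.1
        rw [show pij.1 + u * (ε / 2) - (p i).1 = u * (r i + ε / 2) from by linear_combination hP1i,
          abs_mul, hu, one_mul, abs_of_pos (by linarith)] at h1'
        linarith
      · rw [mem_homSq hrj] at h
        have h2' : |pij.2 - v * (ε / 2) - (p j).2| ≤ r j := h.2
        rw [show pij.2 - v * (ε / 2) - (p j).2 = -(v * (r j + ε / 2)) from by linear_combination hP2j,
          abs_neg, abs_mul, hv, one_mul, abs_of_pos (by linarith)] at h2'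
        linarith
    · intro hnb
      have hXof : |(p i).1 - (p j).1| = r i + r j → XContact r p i j :=
        fun h => ⟨hij, h.symm, by rw [h]; exact hdy⟩
      have hYof : |(p i).2 - (p j).2| = r i + r j → YContact r p i j :=
        fun h => ⟨hij, h.symm, by rw [h]; exact hdx⟩
      rw [mem_interior_iff_mem_nhds, Metric.mem_nhds_iff]
      have e1 : pij.1 = (p i).1 + r i / (r i + r j) * ((p j).1 - (p i).1) := by
        rw [hpij1, ht0def]
      have e2 : pij.2 = (p i).2 + r i / (r i + r j) * ((p j).2 - (p i).2) := by
        rw [hpij2, ht0def]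
      rcases hmax with hx | hy
      · have hdy' : |(p i).2 - (p j).2| < r i + r j := by
          rcases lt_or_eq_of_le hdy with h | h
          · exact h
          · exact absurd ⟨hXof hx, hYof h⟩ hnb
        obtain ⟨ε, hε, hcov⟩ :=
          aux_interior (p i).1 (p i).2 (p j).1 (p j).2 (r i) (r j) hri hrj hx hdy'
        refine ⟨ε, hε, ?_⟩
        intro q hq
        rw [Metric.mem_ball, Prod.dist_eq, max_lt_iff, Real.dist_eq, Real.dist_eq] at hq
        rcases hcov q.1 q.2 (by rw [← e1]; exact hq.1) (by rw [← e2]; exact hq.2) with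
          ⟨ha, hb⟩ | ⟨ha, hb⟩
        · exact Or.inl ((mem_homSq hri).mpr ⟨ha, hb⟩)
        · exact Or.inr ((mem_homSq hrj).mpr ⟨ha, hb⟩)
      · have hdx' : |(p i).1 - (p j).1| < r i + r j := by
          rcases lt_or_eq_of_le hdx with h | h
          · exact h
          · exact absurd ⟨hXof h, hYof hy⟩ hnb
        obtain ⟨ε, hε, hcov⟩ :=
          aux_interior (p i).2 (p i).1 (p j).2 (p j).1 (r i) (r j) hri hrj hy hdx'
        refine ⟨ε, hε, ?_⟩
        intro q hq
        rw [Metric.mem_ball, Prod.dist_eq, max_lt_iff, Real.dist_eq, Real.dist_eq] at hq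
        rcases hcov q.2 q.1 (by rw [← e2]; exact hq.2) (by rw [← e1]; exact hq.1) with
          ⟨ha, hb⟩ | ⟨ha, hb⟩
        · exact Or.inl ((mem_homSq hri).mpr ⟨hb, ha⟩)
        · exact Or.inr ((mem_homSq hrj).mpr ⟨hb, ha⟩)
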